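/- Let n ≥ 3 be odd, let r > 0, z = √(1 + r²), and Ω ∈ ℝ. The curves q_i(t) = (r cos(Ωt + 2π(i−1)/n), r sin(Ωt + 2π(i−1)/n), z), i = 1,…,n, form a solution of the curved n-body equations on H² if and only if Ω² = 2 Σ_{j=1}^{(n−1)/2} (1 − cos(2jπ/n)) / ((r² cos(2jπ/n) − 1 − r²)² − 1)^{3/2}. -/

import Mathlib

/-!
Write the bodies as `circlePoint r z θ = (r cos θ, r sin θ, z)`. For two points of this circle
at angular distance `δ`, the pair term `q₂ + (q₁⊙q₂) q₁` is `(1 - cos δ)` times a fixed vector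
plus `sin δ` times the tangent vector at `q₁` (this uses `z² = 1 + r²`). Summed over the vertices
of the polygon, the tangential parts cancel under `δ ↦ 2π - δ`, and comparing the vertical
components of the two sides of the equation of motion leaves
`Ω² = Σ_k interactionCoeff r δ_k * (1 - cos δ_k)`.
For odd `n` the other vertices fall into `(n - 1)/2` mirror pairs, which gives the factor `2`.
-/

open Real

noncomputable section

/-- Lorentz inner product on `ℝ^{2,1} = ℝ × ℝ × ℝ`: `a⊙b = a₁b₁ + a₂b₂ − a₃b₃`. -/
def ldot3 (a b : ℝ × ℝ × ℝ) : ℝ := a.1 * b.1 + a.2.1 * b.2.1 - a.2.2 * b.2.2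

/-- The curved `n`-body problem on the hyperbolic plane `H²`, realized as the upper sheet
`{x² + y² − z² = −1, z > 0}` of the hyperboloid in `ℝ³` with the Lorentz product
(curvature `−1`), equal masses `mᵢ = 1`:  the curves stay on the upper sheet and satisfy
`q̈ᵢ = Σ_{j≠i} (qⱼ + (qᵢ⊙qⱼ) qᵢ)/((qᵢ⊙qⱼ)² − 1)^{3/2} + (q̇ᵢ⊙q̇ᵢ) qᵢ`. -/
def IsHyperbolicSolution (n : ℕ) (q : Fin n → ℝ → ℝ × ℝ × ℝ) : Prop :=
  (∀ i t, ldot3 (q i t) (q i t) = -1 ∧ 0 < (q i t).2.2) ∧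
  ∀ i t, deriv (deriv (q i)) t =
    (∑ j ∈ Finset.univ.erase i,
      (1 / (ldot3 (q i t) (q j t) ^ 2 - 1) ^ ((3 : ℝ) / 2)) •
        (q j t + ldot3 (q i t) (q j t) • q i t))
    + ldot3 (deriv (q i) t) (deriv (q i) t) • q i t

/-- The regular `n`-gon configuration rotating with angular velocity `Ω` on the circle of
radius `r` at height `z = √(1 + r²)` on the hyperboloid (bodies indexed by
`i = 0,…,n−1`, corresponding to `i = 1,…,n` in the paper). -/
def polygonH (n : ℕ) (r Ω : ℝ) (i : Fin n) (t : ℝ) : ℝ × ℝ × ℝ :=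
  (r * Real.cos (Ω * t + 2 * π * ((i : ℕ) : ℝ) / n),
   r * Real.sin (Ω * t + 2 * π * ((i : ℕ) : ℝ) / n),
   Real.sqrt (1 + r ^ 2))

open Finset Function

theorem Finset.sum_range_two_mul_add_one {M : Type*} [AddCommMonoid M] (f : ℕ → M) (m : ℕ) :
    ∑ k ∈ range (2 * m + 1), f k = f 0 + ∑ k ∈ Icc 1 m, (f k + f (2 * m + 1 - k)) := by
  rw [← Ico_add_one_right_eq_Icc, sum_Ico_eq_sum_range, Nat.add_sub_cancel, sum_add_distrib,
    sum_range_succ', two_mul, sum_range_add]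
  have hreflect : ∑ k ∈ range m, f (m + m + 1 - (1 + k)) = ∑ k ∈ range m, f (m + k + 1) := by
    rw [← sum_range_reflect]
    refine sum_congr rfl fun k hk => congrArg f ?_
    rw [mem_range] at hk
    omega
  rw [hreflect]
  simp only [add_comm 1]
  abel

def circlePoint (r z θ : ℝ) : ℝ × ℝ × ℝ := (r * cos θ, r * sin θ, z)

theorem ldot3_circlePoint (r z α β : ℝ) :
    ldot3 (circlePoint r z α) (circlePoint r z β) = r ^ 2 * cos (β - α) - z ^ 2 := by
  simp only [ldot3, circlePoint, cos_sub]
  ring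

theorem smul_circlePoint (c r z θ : ℝ) : c • circlePoint r z θ = circlePoint (c * r) (c * z) θ := by
  simp only [circlePoint, Prod.smul_mk, smul_eq_mul, mul_assoc]

theorem circlePoint_add_circlePoint (r z r' z' θ : ℝ) :
    circlePoint r z θ + circlePoint r' z' θ = circlePoint (r + r') (z + z') θ := by
  simp only [circlePoint, Prod.mk_add_mk, add_mul]

theorem circlePoint_inj {r z r' z' θ : ℝ} :
    circlePoint r z θ = circlePoint r' z' θ ↔ r = r' ∧ z = z' := by
  simp only [circlePoint, Prod.mk.injEq]
  refine ⟨fun ⟨hc, hs, hz⟩ => ⟨?_, hz⟩, fun ⟨hr, hz⟩ => ⟨by rw [hr], by rw [hr], hz⟩⟩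
  linear_combination cos θ * hc + sin θ * hs + (r' - r) * sin_sq_add_cos_sq θ

theorem circlePoint_add_pi (r z θ : ℝ) : circlePoint r z (θ + π) = circlePoint (-r) z θ := by
  simp only [circlePoint, cos_add_pi, sin_add_pi, mul_neg, neg_mul]

theorem deriv_circlePoint (r z Ω φ : ℝ) :
    deriv (fun t => circlePoint r z (Ω * t + φ)) =
      fun t => circlePoint (r * Ω) 0 (Ω * t + (φ + π / 2)) := by
  funext t
  have hθ : HasDerivAt (fun s : ℝ => Ω * s + φ) Ω t := by
    simpa using ((hasDerivAt_id t).const_mul Ω).add_const φ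
  have hx := (hθ.cos.const_mul r).prodMk ((hθ.sin.const_mul r).prodMk (hasDerivAt_const t z))
  refine hx.deriv.trans ?_
  simp only [circlePoint, ← add_assoc, cos_add_pi_div_two, sin_add_pi_div_two]
  ring_nf

theorem deriv_deriv_circlePoint (r z Ω φ : ℝ) :
    deriv (deriv (fun t => circlePoint r z (Ω * t + φ))) =
      fun t => circlePoint (-(r * Ω ^ 2)) 0 (Ω * t + φ) := by
  simp only [deriv_circlePoint]
  funext t
  rw [show Ω * t + (φ + π / 2 + π / 2) = Ω * t + φ + π by ring, circlePoint_add_pi]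
  ring_nf

def pairForce (p q : ℝ × ℝ × ℝ) : ℝ × ℝ × ℝ :=
  (1 / (ldot3 p q ^ 2 - 1) ^ ((3 : ℝ) / 2)) • (q + ldot3 p q • p)

/-- The factor `1 / ((q₁⊙q₂)² − 1)^{3/2}` for two points of the circle of radius `r` on the
hyperboloid at angular distance `δ`. -/
def interactionCoeff (r δ : ℝ) : ℝ := 1 / ((r ^ 2 * cos δ - 1 - r ^ 2) ^ 2 - 1) ^ ((3 : ℝ) / 2)

theorem interactionCoeff_two_pi_sub (r δ : ℝ) :
    interactionCoeff r (2 * π - δ) = interactionCoeff r δ := by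
  simp only [interactionCoeff, cos_two_pi_sub]

theorem pairForce_circlePoint {r z : ℝ} (hz : z ^ 2 = 1 + r ^ 2) (α β : ℝ) :
    pairForce (circlePoint r z α) (circlePoint r z β) =
      interactionCoeff r (β - α) •
        ((1 - cos (β - α)) • circlePoint (-(r * (1 + r ^ 2))) (-(r ^ 2 * z)) α +
          sin (β - α) • circlePoint r 0 (α + π / 2)) := by
  rw [pairForce, ldot3_circlePoint, hz, ← sub_sub, interactionCoeff]
  congr 1
  have hβ : β = α + (β - α) := by ring
  generalize β - α = δ at hβ ⊢
  subst hβ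
  simp only [circlePoint, Prod.smul_mk, Prod.mk_add_mk, smul_eq_mul, cos_add, sin_add,
    cos_pi_div_two, sin_pi_div_two, Prod.mk.injEq]
  exact ⟨by ring, by ring, by ring⟩

def vertexAngle (n k : ℕ) : ℝ := 2 * π * k / n

theorem vertexAngle_add (n a b : ℕ) :
    vertexAngle n (a + b) = vertexAngle n a + vertexAngle n b := by
  simp only [vertexAngle, Nat.cast_add]
  ring

theorem vertexAngle_sub {n k : ℕ} (hn : n ≠ 0) (hk : k ≤ n) :
    vertexAngle n (n - k) = 2 * π - vertexAngle n k := by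
  simp only [vertexAngle, Nat.cast_sub hk]
  field_simp

theorem Function.Periodic.vertexAngle_mod {M : Type*} {G : ℝ → M} (hG : Periodic G (2 * π))
    {n : ℕ} (hn : n ≠ 0) (a : ℕ) : G (vertexAngle n (a % n)) = G (vertexAngle n a) := by
  have h : vertexAngle n a = vertexAngle n (a % n) + (a / n : ℕ) * (2 * π) := by
    conv_lhs => rw [← Nat.mod_add_div a n]
    simp only [vertexAngle, Nat.cast_add, Nat.cast_mul]
    field_simp
  rw [h, hG.nat_mul _ _]

/-- Rotating the polygon by one of its own vertices permutes the vertices. -/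
theorem Function.Periodic.sum_vertexAngle_sub {M : Type*} [AddCommMonoid M] {G : ℝ → M}
    (hG : Periodic G (2 * π)) {n : ℕ} [NeZero n] (i : Fin n) :
    ∑ j : Fin n, G (vertexAngle n j - vertexAngle n i) = ∑ k ∈ range n, G (vertexAngle n k) := by
  rw [← Equiv.sum_comp (Equiv.addLeft i), ← Fin.sum_univ_eq_sum_range]
  refine sum_congr rfl fun k _ => ?_
  have hmod := (hG.sub_const (vertexAngle n i)).vertexAngle_mod (NeZero.ne n) (i + k)
  rw [Equiv.coe_addLeft, Fin.val_add, hmod, vertexAngle_add, add_sub_cancel_left]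

theorem polygonH_eq_circlePoint (n : ℕ) (r Ω : ℝ) (i : Fin n) :
    polygonH n r Ω i = fun t => circlePoint r √(1 + r ^ 2) (Ω * t + vertexAngle n i) :=
  rfl

theorem polygonH_mem_hyperboloid (n : ℕ) (r Ω : ℝ) (i : Fin n) (t : ℝ) :
    ldot3 (polygonH n r Ω i t) (polygonH n r Ω i t) = -1 ∧ 0 < (polygonH n r Ω i t).2.2 := by
  simp only [polygonH_eq_circlePoint, ldot3_circlePoint, sub_self, cos_zero, mul_one,
    sq_sqrt (by positivity : (0 : ℝ) ≤ 1 + r ^ 2)]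
  exact ⟨by ring, sqrt_pos.2 (by positivity)⟩

theorem polygonH_force (n : ℕ) [NeZero n] (r Ω : ℝ) (i : Fin n) (t : ℝ) :
    ∑ j ∈ univ.erase i, pairForce (polygonH n r Ω i t) (polygonH n r Ω j t) =
      (∑ k ∈ range n, interactionCoeff r (vertexAngle n k) * (1 - cos (vertexAngle n k))) •
          circlePoint (-(r * (1 + r ^ 2))) (-(r ^ 2 * √(1 + r ^ 2))) (Ω * t + vertexAngle n i) +
        (∑ k ∈ range n, interactionCoeff r (vertexAngle n k) * sin (vertexAngle n k)) •
          circlePoint r 0 (Ω * t + vertexAngle n i + π / 2) := by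
  have hz : √(1 + r ^ 2) ^ 2 = 1 + r ^ 2 := sq_sqrt (by positivity)
  simp only [polygonH_eq_circlePoint, pairForce_circlePoint hz, add_sub_add_left_eq_sub]
  rw [sum_erase _ (by simp)]
  simp only [smul_add, smul_smul, sum_add_distrib, ← sum_smul]
  have hcos : Periodic (fun δ => interactionCoeff r δ * (1 - cos δ)) (2 * π) := fun δ => by
    simp only [interactionCoeff, cos_add_two_pi]
  have hsin : Periodic (fun δ => interactionCoeff r δ * sin δ) (2 * π) := fun δ => by
    simp only [interactionCoeff, cos_add_two_pi, sin_add_two_pi]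
  rw [hcos.sum_vertexAngle_sub i, hsin.sum_vertexAngle_sub i]

theorem sum_range_interactionCoeff_mul_sin (m : ℕ) (r : ℝ) :
    ∑ k ∈ range (2 * m + 1),
      interactionCoeff r (vertexAngle (2 * m + 1) k) * sin (vertexAngle (2 * m + 1) k) = 0 := by
  rw [sum_range_two_mul_add_one]
  refine (congrArg₂ (· + ·) ?_ (sum_eq_zero fun k hk => ?_)).trans (add_zero 0)
  · simp [vertexAngle]
  · rw [mem_Icc] at hk
    rw [vertexAngle_sub (by omega) (by omega), interactionCoeff_two_pi_sub, sin_two_pi_sub]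
    ring

def polygonOmegaSq (n : ℕ) (r : ℝ) : ℝ :=
  ∑ k ∈ range n, interactionCoeff r (vertexAngle n k) * (1 - cos (vertexAngle n k))

theorem polygonOmegaSq_two_mul_add_one (m : ℕ) (r : ℝ) :
    polygonOmegaSq (2 * m + 1) r = 2 * ∑ j ∈ Icc 1 m,
      (1 - cos (2 * (j : ℝ) * π / (2 * m + 1 : ℕ))) /
      ((r ^ 2 * cos (2 * (j : ℝ) * π / (2 * m + 1 : ℕ)) - 1 - r ^ 2) ^ 2 - 1) ^ ((3 : ℝ) / 2) := by
  rw [polygonOmegaSq, sum_range_two_mul_add_one, mul_sum]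
  refine (congrArg₂ (· + ·) ?_ (sum_congr rfl fun k hk => ?_)).trans (zero_add _)
  · simp [vertexAngle]
  · rw [mem_Icc] at hk
    have hangle : vertexAngle (2 * m + 1) k = 2 * (k : ℝ) * π / (2 * m + 1 : ℕ) := by
      rw [vertexAngle]
      ring
    rw [vertexAngle_sub (by omega) (by omega), interactionCoeff_two_pi_sub, cos_two_pi_sub,
      interactionCoeff, hangle]
    ring

theorem polygonH_equation_iff (m : ℕ) {r : ℝ} (hr : r ≠ 0) (Ω : ℝ) (i : Fin (2 * m + 1)) (t : ℝ) :
    deriv (deriv (polygonH (2 * m + 1) r Ω i)) t =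
        ∑ j ∈ univ.erase i,
            pairForce (polygonH (2 * m + 1) r Ω i t) (polygonH (2 * m + 1) r Ω j t) +
          ldot3 (deriv (polygonH (2 * m + 1) r Ω i) t) (deriv (polygonH (2 * m + 1) r Ω i) t) •
            polygonH (2 * m + 1) r Ω i t ↔
      Ω ^ 2 = polygonOmegaSq (2 * m + 1) r := by
  have hz0 : √(1 + r ^ 2) ≠ 0 := (sqrt_pos.2 (by positivity)).ne'
  rw [polygonH_force, sum_range_interactionCoeff_mul_sin, zero_smul, add_zero, ← polygonOmegaSq,
    polygonH_eq_circlePoint, deriv_deriv_circlePoint, deriv_circlePoint]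
  simp only [ldot3_circlePoint, sub_self, cos_zero, mul_one, smul_circlePoint,
    circlePoint_add_circlePoint, circlePoint_inj]
  constructor
  · rintro ⟨-, h⟩
    have h' : r ^ 2 * √(1 + r ^ 2) * (Ω ^ 2 - polygonOmegaSq (2 * m + 1) r) = 0 := by
      linear_combination -h
    simpa [hr, hz0, sub_eq_zero] using h'
  · intro h
    constructor
    · linear_combination (-(r * (1 + r ^ 2))) * h
    · linear_combination (-(r ^ 2 * √(1 + r ^ 2))) * h

theorem polygon_relative_equilibrium_iff_hyperbolic_odd_general
    (n : ℕ) (hodd : Odd n) (r : ℝ) (hr0 : 0 < r) (Ω : ℝ) :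
    IsHyperbolicSolution n (polygonH n r Ω) ↔
      Ω ^ 2 = 2 * ∑ j ∈ Finset.Icc 1 ((n - 1) / 2),
        (1 - Real.cos (2 * (j : ℝ) * π / n)) /
          ((r ^ 2 * Real.cos (2 * (j : ℝ) * π / n) - 1 - r ^ 2) ^ 2 - 1) ^ ((3 : ℝ) / 2) := by
  obtain ⟨m, rfl⟩ := hodd
  rw [show (2 * m + 1 - 1) / 2 = m by omega, ← polygonOmegaSq_two_mul_add_one]
  have hequation := polygonH_equation_iff m hr0.ne' Ω
  refine ⟨fun ⟨_, hmotion⟩ => (hequation 0 0).1 (hmotion 0 0), fun h => ?_⟩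
  exact ⟨polygonH_mem_hyperboloid _ r Ω, fun i t => (hequation i t).2 h⟩

/-- For odd `n ≥ 3` and `r > 0`, the rotating regular `n`-gon at height `z = √(1 + r²)`
on `H²` is a solution of the curved `n`-body equations if and only if
`Ω² = 2 Σ_{j=1}^{(n−1)/2} (1 − cos(2jπ/n)) / ((r² cos(2jπ/n) − 1 − r²)² − 1)^{3/2}`. -/
theorem polygon_relative_equilibrium_iff_hyperbolic_odd
    (n : ℕ) (hn : 3 ≤ n) (hodd : Odd n) (r : ℝ) (hr0 : 0 < r) (Ω : ℝ) :
    IsHyperbolicSolution n (polygonH n r Ω) ↔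
      Ω ^ 2 = 2 * ∑ j ∈ Finset.Icc 1 ((n - 1) / 2),
        (1 - Real.cos (2 * (j : ℝ) * π / n)) /
          ((r ^ 2 * Real.cos (2 * (j : ℝ) * π / n) - 1 - r ^ 2) ^ 2 - 1) ^ ((3 : ℝ) / 2) :=
  polygon_relative_equilibrium_iff_hyperbolic_odd_general n hodd r hr0 Ω
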